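/- Let d ≥ 2 and let κ_i : ℝ → ℝ, i = 1, …, d−1, be continuous. Let K(s) be the d×d skew-symmetric matrix with K(s)_{i,i+1} = κ_i(s), K(s)_{i+1,i} = −κ_i(s) and all other entries zero, and suppose e_1, …, e_d : ℝ → ℝ^d are differentiable and satisfy the Frenet–Serret equations ė_i(s) = Σ_{j=1}^d K(s)_{ij} e_j(s). Let K̂(s) denote the lower-right (d−1)×(d−1) block of K(s) (rows and columns 2, …, d) and let R : ℝ → Matrix (Fin (d−1)) (Fin (d−1)) ℝ be differentiable with Ṙ(s) + R(s) K̂(s) = 0. Define the Tang frame vectors ẽ_μ(s) = Σ_{ν=1}^{d−1} R(s)_{μν} e_{ν+1}(s) for μ = 1, …, d−1. Then for every μ and every s, the derivative of ẽ_μ satisfies ẽ̇_μ(s) = −κ_1(s) R(s)_{μ1} e_1(s); in particular ẽ̇_μ(s) is parallel to the tangent vector e_1(s). -/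

import Mathlib

/-! The Tang frame rotates the normals by `R` exactly against the normal–normal block `K̂` of
the Frenet matrix: in `d/ds (R e_{·+1}) = Ṙ e_{·+1} + R ė_{·+1}` the term `R K̂ e_{·+1}` cancels
`Ṙ e_{·+1} = -R K̂ e_{·+1}`, and only the tangential column `R K_{·+1,1} e_1` survives. Since
`K` is tridiagonal, that column has the single entry `K_{21} = -κ_1`. -/

section TangFrame

variable {E : Type*} [NormedAddCommGroup E] [NormedSpace ℝ E] {n : ℕ}

theorem sum_smul_sum_succ_eq (K : Matrix (Fin (n + 1)) (Fin (n + 1)) ℝ) (r : Fin n → ℝ)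
    (e : Fin (n + 1) → E) :
    ∑ ν, r ν • ∑ j, K ν.succ j • e j
      = (∑ ν, r ν * K ν.succ 0) • e 0 + ∑ ν : Fin n, (∑ ρ, r ρ * K ρ.succ ν.succ) • e ν.succ := by
  simp only [Fin.sum_univ_succ (fun j => K _ j • e j), smul_add, Finset.sum_add_distrib,
    Finset.smul_sum, smul_smul, Finset.sum_smul]
  rw [Finset.sum_comm]

theorem hasDerivAt_sum_smul_succ {K : ℝ → Matrix (Fin (n + 1)) (Fin (n + 1)) ℝ}
    {e : Fin (n + 1) → ℝ → E} {r : ℝ → Fin n → ℝ} {s : ℝ}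
    (he : ∀ i, HasDerivAt (e i) (∑ j, K s i j • e j s) s)
    (hr : ∀ ν, HasDerivAt (fun t => r t ν) (-∑ ρ, r s ρ * K s ρ.succ ν.succ) s) :
    HasDerivAt (fun t => ∑ ν, r t ν • e ν.succ t) ((∑ ν, r s ν * K s ν.succ 0) • e 0 s) s := by
  have hprod : HasDerivAt (fun t => ∑ ν, r t ν • e ν.succ t)
      (∑ ν, (r s ν • ∑ j, K s ν.succ j • e j s
        + (-∑ ρ, r s ρ * K s ρ.succ ν.succ) • e ν.succ s)) s :=
    HasDerivAt.fun_sum fun ν _ => (hr ν).smul (he ν.succ)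
  convert hprod using 1
  rw [Finset.sum_add_distrib, sum_smul_sum_succ_eq]
  simp only [neg_smul, Finset.sum_neg_distrib, add_neg_cancel_right]

theorem sum_mul_succ_zero_of_tridiagonal (K : Matrix (Fin (n + 1)) (Fin (n + 1)) ℝ)
    (hK : ∀ i j : Fin (n + 1), (i : ℕ) + 1 ≠ j → (j : ℕ) + 1 ≠ i → K i j = 0)
    (r : Fin n → ℝ) (hn : 0 < n) :
    ∑ ν, r ν * K ν.succ 0 = r ⟨0, hn⟩ * K (Fin.succ ⟨0, hn⟩) 0 := by
  refine Finset.sum_eq_single _ (fun ν _ hν => ?_) (by simp)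
  have hν : (ν : ℕ) ≠ 0 := fun h => hν (Fin.ext h)
  rw [hK _ _ (by simp) (by simp [Fin.val_succ]; omega), mul_zero]

end TangFrame

theorem tang_frame_derivative_tangential_general
    (n : ℕ) (hn : 1 ≤ n)
    (κ : Fin n → ℝ → ℝ)
    (K : ℝ → Matrix (Fin (n + 1)) (Fin (n + 1)) ℝ)
    (hK2 : ∀ (s : ℝ) (i : Fin n), K s i.succ i.castSucc = -κ i s)
    (hK0 : ∀ (s : ℝ) (i j : Fin (n + 1)),
      (i : ℕ) + 1 ≠ (j : ℕ) → (j : ℕ) + 1 ≠ (i : ℕ) → K s i j = 0)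
    (e : Fin (n + 1) → ℝ → EuclideanSpace ℝ (Fin (n + 1)))
    (he : ∀ (i : Fin (n + 1)) (s : ℝ),
      HasDerivAt (e i) (∑ j : Fin (n + 1), K s i j • e j s) s)
    (R : ℝ → Matrix (Fin n) (Fin n) ℝ)
    (hR : ∀ (s : ℝ) (μ ν : Fin n),
      HasDerivAt (fun t => R t μ ν) (-∑ ρ : Fin n, R s μ ρ * K s ρ.succ ν.succ) s) :
    ∀ (μ : Fin n) (s : ℝ),
      HasDerivAt (fun t => ∑ ν : Fin n, R t μ ν • e ν.succ t)
        ((-(κ ⟨0, hn⟩ s * R s μ ⟨0, hn⟩)) • e 0 s) s := by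
  intro μ s
  have htangential : ∑ ν, R s μ ν * K s ν.succ 0 = -(κ ⟨0, hn⟩ s * R s μ ⟨0, hn⟩) := by
    rw [sum_mul_succ_zero_of_tridiagonal (K s) (hK0 s) (R s μ) hn]
    rw [show K s (Fin.succ ⟨0, hn⟩) 0 = -κ ⟨0, hn⟩ s from hK2 s ⟨0, hn⟩]
    ring
  rw [← htangential]
  exact hasDerivAt_sum_smul_succ (fun i => he i s) (hR s μ)

/-- (with `d = n + 1`, `n ≥ 1`, so that `d ≥ 2`) Given a Frenet frame
`e 0, …, e n` in `ℝ^{n+1}` satisfying `ė_i = Σ_j K_{ij} e_j` with the skew-symmetric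
Frenet matrix `K` built from the curvatures `κ_i`, and `R` solving `Ṙ + R K̂ = 0`
where `K̂` is the lower-right `n × n` block of `K`, the Tang frame vectors
`ẽ_μ = Σ_ν R_{μν} e_{ν+1}` satisfy `ẽ̇_μ(s) = −κ₁(s) R_{μ1}(s) e₁(s)`; in particular
their derivatives are parallel to the tangent vector `e₁ = e 0`. -/
theorem tang_frame_derivative_tangential
    (n : ℕ) (hn : 1 ≤ n)
    (κ : Fin n → ℝ → ℝ) (hκ : ∀ i, Continuous (κ i))
    (K : ℝ → Matrix (Fin (n + 1)) (Fin (n + 1)) ℝ)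
    (hK1 : ∀ (s : ℝ) (i : Fin n), K s i.castSucc i.succ = κ i s)
    (hK2 : ∀ (s : ℝ) (i : Fin n), K s i.succ i.castSucc = -κ i s)
    (hK0 : ∀ (s : ℝ) (i j : Fin (n + 1)),
      (i : ℕ) + 1 ≠ (j : ℕ) → (j : ℕ) + 1 ≠ (i : ℕ) → K s i j = 0)
    (e : Fin (n + 1) → ℝ → EuclideanSpace ℝ (Fin (n + 1)))
    (he : ∀ (i : Fin (n + 1)) (s : ℝ),
      HasDerivAt (e i) (∑ j : Fin (n + 1), K s i j • e j s) s)
    (R : ℝ → Matrix (Fin n) (Fin n) ℝ)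
    (hR : ∀ (s : ℝ) (μ ν : Fin n),
      HasDerivAt (fun t => R t μ ν) (-∑ ρ : Fin n, R s μ ρ * K s ρ.succ ν.succ) s) :
    ∀ (μ : Fin n) (s : ℝ),
      HasDerivAt (fun t => ∑ ν : Fin n, R t μ ν • e ν.succ t)
        ((-(κ ⟨0, hn⟩ s * R s μ ⟨0, hn⟩)) • e 0 s) s :=
  tang_frame_derivative_tangential_general n hn κ K hK2 hK0 e he R hR
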